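/- arXiv:1001.2363 — 2 statements merged into one kernel-verified Lean document; each statement's English description precedes it below -/
import Mathlib

section
/- Suppose ‖P_T P_Ω‖ ≤ 1/2. Then for any pair X = (L, S) of real n×n matrices, ‖P_Γ((P_T × P_Ω)(X))‖_F² ≥ (1/4)·‖(P_T × P_Ω)(X)‖_F². -/
open Matrix BigOperators

noncomputable def frobNorm {m k : ℕ} (A : Matrix (Fin m) (Fin k) ℝ) : ℝ :=
  Real.sqrt (∑ i, ∑ j, (A i j) ^ 2)

noncomputable def nuclearNorm {m k : ℕ} (A : Matrix (Fin m) (Fin k) ℝ) : ℝ :=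
  ∑ i, Real.sqrt ((Matrix.isHermitian_conjTranspose_mul_self A).eigenvalues i)

def l1Norm {m k : ℕ} (A : Matrix (Fin m) (Fin k) ℝ) : ℝ :=
  ∑ i, ∑ j, |A i j|

noncomputable def linfNorm {m k : ℕ} (A : Matrix (Fin m) (Fin k) ℝ) : ℝ :=
  ⨆ i, ⨆ j, |A i j|

noncomputable def specNorm {m k : ℕ} (A : Matrix (Fin m) (Fin k) ℝ) : ℝ :=
  ‖LinearMap.toContinuousLinearMap (Matrix.toEuclideanLin A)‖

def finner {m k : ℕ} (A B : Matrix (Fin m) (Fin k) ℝ) : ℝ :=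
  ∑ i, ∑ j, A i j * B i j

noncomputable def projSet {n : ℕ} (Ω : Set (Fin n × Fin n)) (S : Matrix (Fin n) (Fin n) ℝ) :
    Matrix (Fin n) (Fin n) ℝ :=
  fun i j => Ω.indicator (fun p => S p.1 p.2) (i, j)

def suppSet {n : ℕ} (S : Matrix (Fin n) (Fin n) ℝ) : Set (Fin n × Fin n) :=
  {p | S p.1 p.2 ≠ 0}

noncomputable def sgnMat {n : ℕ} (S : Matrix (Fin n) (Fin n) ℝ) : Matrix (Fin n) (Fin n) ℝ :=
  fun i j => Real.sign (S i j)

def Tspace {n r : ℕ} (U V : Matrix (Fin n) (Fin r) ℝ) : Set (Matrix (Fin n) (Fin n) ℝ) :=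
  {X | ∃ Q R : Matrix (Fin n) (Fin r) ℝ, X = U * Qᵀ + R * Vᵀ}

def IsOrthProjOnto {n : ℕ} (P : Matrix (Fin n) (Fin n) ℝ →ₗ[ℝ] Matrix (Fin n) (Fin n) ℝ)
    (T : Set (Matrix (Fin n) (Fin n) ℝ)) : Prop :=
  (∀ X, P X ∈ T) ∧ (∀ X ∈ T, P X = X) ∧ (∀ X Y, Y ∈ T → finner (X - P X) Y = 0)

noncomputable def pairFrob {n : ℕ} (X : Matrix (Fin n) (Fin n) ℝ × Matrix (Fin n) (Fin n) ℝ) : ℝ :=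
  Real.sqrt (frobNorm X.1 ^ 2 + frobNorm X.2 ^ 2)

noncomputable def projGamma {n : ℕ} (X : Matrix (Fin n) (Fin n) ℝ × Matrix (Fin n) (Fin n) ℝ) :
    Matrix (Fin n) (Fin n) ℝ × Matrix (Fin n) (Fin n) ℝ :=
  ((1/2 : ℝ) • (X.1 + X.2), (1/2 : ℝ) • (X.1 + X.2))

open scoped Classical

noncomputable def suppFinset {n : ℕ} (S : Matrix (Fin n) (Fin n) ℝ) : Finset (Fin n × Fin n) :=
  Finset.univ.filter (fun p => S p.1 p.2 ≠ 0)


section Frobenius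

variable {m k : ℕ}

lemma frobNorm_nonneg (A : Matrix (Fin m) (Fin k) ℝ) : 0 ≤ frobNorm A :=
  Real.sqrt_nonneg _

lemma frobNorm_sq (A : Matrix (Fin m) (Fin k) ℝ) :
    frobNorm A ^ 2 = ∑ i, ∑ j, A i j ^ 2 :=
  Real.sq_sqrt (Finset.sum_nonneg fun _ _ => Finset.sum_nonneg fun _ _ => sq_nonneg _)

lemma finner_comm (A B : Matrix (Fin m) (Fin k) ℝ) : finner A B = finner B A := by
  simp only [finner, mul_comm]

lemma finner_sub_left (A B C : Matrix (Fin m) (Fin k) ℝ) :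
    finner (A - B) C = finner A C - finner B C := by
  simp only [finner, Matrix.sub_apply, sub_mul, Finset.sum_sub_distrib]

lemma abs_finner_le (A B : Matrix (Fin m) (Fin k) ℝ) :
    |finner A B| ≤ frobNorm A * frobNorm B := by
  have h := Real.sum_mul_le_sqrt_mul_sqrt (Finset.univ : Finset (Fin m × Fin k))
    (fun p => |A p.1 p.2|) (fun p => |B p.1 p.2|)
  simp only [sq_abs, ← abs_mul, ← Finset.univ_product_univ, Finset.sum_product] at h
  exact (Finset.abs_sum_le_sum_abs _ _).trans
    ((Finset.sum_le_sum fun i _ => Finset.abs_sum_le_sum_abs _ _).trans h)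

lemma frobNorm_half_smul_add_sq (A B : Matrix (Fin m) (Fin k) ℝ) :
    frobNorm ((1 / 2 : ℝ) • (A + B)) ^ 2 =
      (frobNorm A ^ 2 + 2 * finner A B + frobNorm B ^ 2) / 4 := by
  simp only [frobNorm_sq, finner, Matrix.smul_apply, Matrix.add_apply, smul_eq_mul,
    Finset.mul_sum, ← Finset.sum_add_distrib, Finset.sum_div]
  exact Finset.sum_congr rfl fun i _ => Finset.sum_congr rfl fun j _ => by ring

end Frobenius

lemma projSet_projSet {n : ℕ} (Ω : Set (Fin n × Fin n)) (S : Matrix (Fin n) (Fin n) ℝ) :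
    projSet Ω (projSet Ω S) = projSet Ω S := by
  funext i j
  by_cases h : (i, j) ∈ Ω <;> simp [projSet, h]

lemma IsOrthProjOnto.finner_apply_left {n : ℕ}
    {P : Matrix (Fin n) (Fin n) ℝ →ₗ[ℝ] Matrix (Fin n) (Fin n) ℝ}
    {T : Set (Matrix (Fin n) (Fin n) ℝ)} (hP : IsOrthProjOnto P T)
    (X : Matrix (Fin n) (Fin n) ℝ) {Y : Matrix (Fin n) (Fin n) ℝ} (hY : Y ∈ T) :
    finner (P X) Y = finner X Y := by
  have h := hP.2.2 X Y hY
  rw [finner_sub_left] at h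
  linarith

section Pairs

variable {n : ℕ}

lemma pairFrob_sq (X : Matrix (Fin n) (Fin n) ℝ × Matrix (Fin n) (Fin n) ℝ) :
    pairFrob X ^ 2 = frobNorm X.1 ^ 2 + frobNorm X.2 ^ 2 :=
  Real.sq_sqrt (by positivity)

lemma pairFrob_projGamma_sq (X : Matrix (Fin n) (Fin n) ℝ × Matrix (Fin n) (Fin n) ℝ) :
    pairFrob (projGamma X) ^ 2 =
      (frobNorm X.1 ^ 2 + 2 * finner X.1 X.2 + frobNorm X.2 ^ 2) / 2 := by
  rw [pairFrob_sq]
  simp only [projGamma, frobNorm_half_smul_add_sq]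
  ring

/-- `‖A‖² + ‖B‖² - 2c ‖A‖ ‖B‖ ≥ (1 - c)(‖A‖² + ‖B‖²)` because the difference is
`c (‖A‖ - ‖B‖)²`. -/
lemma pairFrob_projGamma_sq_ge {c : ℝ} (hc : 0 ≤ c) {A B : Matrix (Fin n) (Fin n) ℝ}
    (hAB : -(c * frobNorm A * frobNorm B) ≤ finner A B) :
    (1 - c) / 2 * pairFrob (A, B) ^ 2 ≤ pairFrob (projGamma (A, B)) ^ 2 := by
  rw [pairFrob_sq, pairFrob_projGamma_sq]
  nlinarith [mul_nonneg hc (sq_nonneg (frobNorm A - frobNorm B))]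

end Pairs

/-- Since `P_T L ∈ T` and `P_Ω` is idempotent, `⟨P_T L, P_Ω S⟩ = ⟨P_T L, P_T P_Ω (P_Ω S)⟩`,
to which Cauchy–Schwarz and the bound on `P_T P_Ω` apply. -/
lemma neg_mul_le_finner_of_opNorm_le {n : ℕ} {c : ℝ}
    {T : Set (Matrix (Fin n) (Fin n) ℝ)}
    {PT : Matrix (Fin n) (Fin n) ℝ →ₗ[ℝ] Matrix (Fin n) (Fin n) ℝ}
    (hPT : IsOrthProjOnto PT T) {Ω : Set (Fin n × Fin n)}
    (hop : ∀ X : Matrix (Fin n) (Fin n) ℝ, frobNorm (PT (projSet Ω X)) ≤ c * frobNorm X)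
    (L S : Matrix (Fin n) (Fin n) ℝ) :
    -(c * frobNorm (PT L) * frobNorm (projSet Ω S)) ≤ finner (PT L) (projSet Ω S) := by
  have hPTS : frobNorm (PT (projSet Ω S)) ≤ c * frobNorm (projSet Ω S) := by
    simpa only [projSet_projSet] using hop (projSet Ω S)
  have hangle : finner (PT L) (projSet Ω S) = finner (PT (projSet Ω S)) (PT L) := by
    rw [finner_comm, hPT.finner_apply_left _ (hPT.1 L)]
  have hcs := neg_abs_le (finner (PT (projSet Ω S)) (PT L))
  have hcs' := abs_finner_le (PT (projSet Ω S)) (PT L)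
  rw [hangle]
  nlinarith [frobNorm_nonneg (PT L)]

/-- Lemma 2.
If ‖P_T P_Ω‖ ≤ 1/2 then for any pair X = (L, S),
‖P_Γ((P_T × P_Ω)(X))‖_F² ≥ (1/4)‖(P_T × P_Ω)(X)‖_F². -/
theorem stmt5 {n : ℕ} (T : Submodule ℝ (Matrix (Fin n) (Fin n) ℝ))
    (PT : Matrix (Fin n) (Fin n) ℝ →ₗ[ℝ] Matrix (Fin n) (Fin n) ℝ)
    (hPT : IsOrthProjOnto PT (T : Set (Matrix (Fin n) (Fin n) ℝ)))
    (Ω : Set (Fin n × Fin n))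
    -- ‖P_T P_Ω‖ ≤ 1/2
    (hop : ∀ X : Matrix (Fin n) (Fin n) ℝ, frobNorm (PT (projSet Ω X)) ≤ (1 / 2) * frobNorm X)
    (L S : Matrix (Fin n) (Fin n) ℝ) :
    pairFrob (projGamma (PT L, projSet Ω S)) ^ 2 ≥
      (1 / 4) * pairFrob (PT L, projSet Ω S) ^ 2 := by
  have hinner := neg_mul_le_finner_of_opNorm_le hPT hop L S
  calc (1 / 4) * pairFrob (PT L, projSet Ω S) ^ 2
      = (1 - 1 / 2) / 2 * pairFrob (PT L, projSet Ω S) ^ 2 := by norm_num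
    _ ≤ pairFrob (projGamma (PT L, projSet Ω S)) ^ 2 :=
      pairFrob_projGamma_sq_ge (by norm_num) hinner
end

section
/- Suppose ‖P_Ω P_T‖ ≤ 1/2. Then every real n×n matrix H satisfies ‖P_Ω(H)‖_F ≤ ‖P_{Ω⊥}(H)‖_F + 2·‖P_{T⊥}(H)‖_F. -/
open Matrix BigOperators

open scoped Classical

/-! Apply `P_Ω` to `H = P_T H + P_{T⊥} H`: the first part has norm at most
`‖H‖ / 2 ≤ (‖P_Ω H‖ + ‖P_{Ω⊥} H‖) / 2`, the second at most `‖P_{T⊥} H‖`; rearrange. -/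

theorem norm_le_norm_sub_add_two_mul_of_norm_comp_le_half {E : Type*} [SeminormedAddCommGroup E]
    {Q : E →+ E} {P : E → E} (hQ : ∀ x, ‖Q x‖ ≤ ‖x‖) (hQP : ∀ x, ‖Q (P x)‖ ≤ 1 / 2 * ‖x‖) (x : E) :
    ‖Q x‖ ≤ ‖x - Q x‖ + 2 * ‖x - P x‖ := by
  have hsplit : ‖Q x‖ ≤ 1 / 2 * ‖x‖ + ‖x - P x‖ := calc
    ‖Q x‖ = ‖Q (P x) + Q (x - P x)‖ := by rw [← map_add, add_sub_cancel]
    _ ≤ ‖Q (P x)‖ + ‖Q (x - P x)‖ := norm_add_le _ _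
    _ ≤ 1 / 2 * ‖x‖ + ‖x - P x‖ := add_le_add (hQP x) (hQ _)
  have hx : ‖x‖ ≤ ‖Q x‖ + ‖x - Q x‖ := norm_le_norm_add_norm_sub' x (Q x)
  linarith

attribute [local instance] Matrix.frobeniusSeminormedAddCommGroup

theorem frobNorm_eq_norm {m k : ℕ} (A : Matrix (Fin m) (Fin k) ℝ) : frobNorm A = ‖A‖ := by
  rw [Matrix.frobenius_norm_def, ← Real.sqrt_eq_rpow, frobNorm]
  simp only [Real.norm_eq_abs, Real.rpow_two, sq_abs]

theorem projSet_add {n : ℕ} (Ω : Set (Fin n × Fin n)) (A B : Matrix (Fin n) (Fin n) ℝ) :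
    projSet Ω (A + B) = projSet Ω A + projSet Ω B := by
  ext i j
  exact congrFun (Set.indicator_add Ω _ _) (i, j)

noncomputable def projSetAddHom {n : ℕ} (Ω : Set (Fin n × Fin n)) :
    Matrix (Fin n) (Fin n) ℝ →+ Matrix (Fin n) (Fin n) ℝ :=
  AddMonoidHom.mk' (projSet Ω) (projSet_add Ω)

theorem norm_projSet_le {n : ℕ} (Ω : Set (Fin n × Fin n)) (A : Matrix (Fin n) (Fin n) ℝ) :
    ‖projSet Ω A‖ ≤ ‖A‖ := by
  rw [← frobNorm_eq_norm, ← frobNorm_eq_norm]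
  refine Real.sqrt_le_sqrt (Finset.sum_le_sum fun i _ => Finset.sum_le_sum fun j _ => ?_)
  rw [projSet, Set.indicator_apply]
  split_ifs
  · exact le_rfl
  · rw [zero_pow two_ne_zero]
    exact sq_nonneg (A i j)

theorem stmt6_general {n : ℕ}
    (PT : Matrix (Fin n) (Fin n) ℝ →ₗ[ℝ] Matrix (Fin n) (Fin n) ℝ)
    (Ω : Set (Fin n × Fin n))
    -- ‖P_Ω P_T‖ ≤ 1/2
    (hop : ∀ X : Matrix (Fin n) (Fin n) ℝ, frobNorm (projSet Ω (PT X)) ≤ (1 / 2) * frobNorm X)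
    (H : Matrix (Fin n) (Fin n) ℝ) :
    frobNorm (projSet Ω H) ≤ frobNorm (H - projSet Ω H) + 2 * frobNorm (H - PT H) := by
  simp only [frobNorm_eq_norm] at hop ⊢
  exact norm_le_norm_sub_add_two_mul_of_norm_comp_le_half (Q := projSetAddHom Ω)
    (norm_projSet_le Ω) hop H

/-- If ‖P_Ω P_T‖ ≤ 1/2, then every H satisfies ‖P_Ω H‖_F ≤ ‖P_{Ω⊥} H‖_F + 2‖P_{T⊥} H‖_F. -/
theorem stmt6 {n : ℕ} (T : Submodule ℝ (Matrix (Fin n) (Fin n) ℝ))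
    (PT : Matrix (Fin n) (Fin n) ℝ →ₗ[ℝ] Matrix (Fin n) (Fin n) ℝ)
    (hPT : IsOrthProjOnto PT (T : Set (Matrix (Fin n) (Fin n) ℝ)))
    (Ω : Set (Fin n × Fin n))
    -- ‖P_Ω P_T‖ ≤ 1/2
    (hop : ∀ X : Matrix (Fin n) (Fin n) ℝ, frobNorm (projSet Ω (PT X)) ≤ (1 / 2) * frobNorm X)
    (H : Matrix (Fin n) (Fin n) ℝ) :
    frobNorm (projSet Ω H) ≤ frobNorm (H - projSet Ω H) + 2 * frobNorm (H - PT H) :=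
  stmt6_general PT Ω hop H
end
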